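/- Let f, h be smooth functions and X_f, X'_f two vector fields with (X_f, df) and (X'_f, df) both sections of E (a big-isotropic structure), and (X_h, dh) a section of E′. Then X_f h = X'_f h; i.e., the Poisson bracket {f,h} = X_f h is independent of the choice of Hamiltonian vector field. -/

import Mathlib

/-!
An algebraic model of Cartan calculus: functions form a commutative
`ℝ`-algebra `A`, vector fields are derivations of `A`, and `1`-forms are
modeled by their evaluation on vector fields.  The differential `dF`, the Lie
derivative `lieD`, the Courant bracket `courant`, the neutral metric `gPair`
and the `2`-form `omPair` of the big tangent bundle are given by their usual
intrinsic formulas.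
-/

variable (A : Type*) [CommRing A] [Algebra ℝ A]

/-- Vector fields: derivations of the algebra of functions. -/
abbrev VF := Derivation ℝ A A

/-- `1`-forms, modeled by their evaluation on vector fields. -/
abbrev Form1 := VF A → A

variable {A}

/-- Differential of a function: `(df)(X) = X f`. -/
def dF (f : A) : Form1 A := fun X => X f

/-- Lie derivative of a `1`-form: `(L_X α)(Y) = X(α(Y)) − α([X,Y])`. -/
def lieD (X : VF A) (α : Form1 A) : Form1 A := fun Y => X (α Y) - α ⁅X, Y⁆

/-- The Courant bracket
`[(X,α),(Y,β)] = ([X,Y], L_X β − L_Y α + (1/2) d(α(Y) − β(X)))`. -/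
noncomputable def courant (P Q : VF A × Form1 A) : VF A × Form1 A :=
  (⁅P.1, Q.1⁆,
    fun Z => lieD P.1 Q.2 Z - lieD Q.1 P.2 Z
      + ((1 : ℝ) / 2) • dF (P.2 Q.1 - Q.2 P.1) Z)

/-- The neutral metric `g((X,α),(Y,β)) = (1/2)(α(Y) + β(X))`. -/
noncomputable def gPair (P Q : VF A × Form1 A) : A := ((1 : ℝ) / 2) • (P.2 Q.1 + Q.2 P.1)

/-- The `2`-form `ω((X,α),(Y,β)) = (1/2)(α(Y) − β(X))`. -/
noncomputable def omPair (P Q : VF A × Form1 A) : A := ((1 : ℝ) / 2) • (P.2 Q.1 - Q.2 P.1)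

/-- The `g`-orthogonal `E′` of a set of sections `E`. -/
noncomputable def orthCompl (E : Set (VF A × Form1 A)) : Set (VF A × Form1 A) :=
  {Q | ∀ P ∈ E, gPair P Q = 0}

theorem gPair_eq_zero_iff (P Q : VF A × Form1 A) :
    gPair P Q = 0 ↔ P.2 Q.1 + Q.2 P.1 = 0 :=
  smul_eq_zero_iff_right (by norm_num)

theorem snd_apply_eq_of_mem_orthCompl {E : Set (VF A × Form1 A)} {P P' Q : VF A × Form1 A}
    (hP : P ∈ E) (hP' : P' ∈ E) (hsnd : P.2 = P'.2) (hQ : Q ∈ orthCompl E) :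
    Q.2 P.1 = Q.2 P'.1 := by
  have hPQ := (gPair_eq_zero_iff P Q).1 (hQ P hP)
  have hP'Q := (gPair_eq_zero_iff P' Q).1 (hQ P' hP')
  rw [hsnd] at hPQ
  exact add_left_cancel (hPQ.trans hP'Q.symm)

theorem poisson_bracket_well_defined_general (E : Set (VF A × Form1 A))
    (f h : A) (Xf Xf' Xh : VF A)
    (hf : (Xf, dF f) ∈ E) (hf' : (Xf', dF f) ∈ E)
    (hh : (Xh, dF h) ∈ orthCompl E) :
    Xf h = Xf' h :=
  snd_apply_eq_of_mem_orthCompl hf hf' rfl hh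

/-- The Poisson bracket `{f,h} = X_f h` of a Hamiltonian function `f` and a
weak-Hamiltonian function `h` is independent of the choice of the Hamiltonian
vector field `X_f`. -/
theorem poisson_bracket_well_defined (E : Set (VF A × Form1 A))
    (hiso : ∀ P ∈ E, ∀ Q ∈ E, gPair P Q = 0)
    (f h : A) (Xf Xf' Xh : VF A)
    (hf : (Xf, dF f) ∈ E) (hf' : (Xf', dF f) ∈ E)
    (hh : (Xh, dF h) ∈ orthCompl E) :
    Xf h = Xf' h :=
  poisson_bracket_well_defined_general E f h Xf Xf' Xh hf hf' hh
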